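/- Let τ: A → 𝔄 be an 𝔄-trace with 𝔄 unital, and let J be the canonical conjugation on L²(A,τ) (J(â) = (a*)^, extended by continuity). Then (iii) J t 1̂ = t* 1̂ for every t ∈ π_τ(A)', where 1̂ = lim êᵢ ∈ L²(A,τ); and (iv) π_τ(A)'' = π_τ^op(A^op)' and π_τ(A)' = π_τ^op(A^op)'' in B(L²(A,τ)). -/

import Mathlib

open Filter Topology

noncomputable section

/-- A positive element of a `*`-ring: one of the form `star b * b`. -/
def IsPosElem {R : Type} [Mul R] [Star R] (x : R) : Prop := ∃ b : R, x = star b * b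

/-- Positivity for an `n × n` matrix over a `*`-ring, phrased entrywise:
`M = star b * b` for some rectangular matrix `b`. -/
def MatPos {R : Type} [AddCommMonoid R] [Mul R] [Star R] {n : ℕ}
    (M : Fin n → Fin n → R) : Prop :=
  ∃ (m : ℕ) (b : Fin m → Fin n → R), ∀ i j, M i j = ∑ k, star (b k i) * b k j

/-- A map between `*`-rings is completely positive if all its amplifications map
positive matrices to positive matrices. -/
def IsCPMap {R Z : Type} [AddCommMonoid R] [Mul R] [Star R]
    [AddCommMonoid Z] [Mul Z] [Star Z] (φ : R → Z) : Prop :=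
  ∀ (n : ℕ) (M : Fin n → Fin n → R), MatPos M → MatPos (fun i j => φ (M i j))

variable (𝔄 A : Type) [NonUnitalCStarAlgebra 𝔄] [NonUnitalCStarAlgebra A]

/-- A compatible right Banach `𝔄`-module structure on the C*-algebra `A`,
making `A` an `𝔄`-C*-module. -/
structure CStarAction where
  act : A → 𝔄 → A
  act_add : ∀ (a : A) (α β : 𝔄), act a (α + β) = act a α + act a β
  add_act : ∀ (a b : A) (α : 𝔄), act (a + b) α = act a α + act b α
  act_smulC : ∀ (c : ℂ) (a : A) (α : 𝔄), act a (c • α) = c • act a α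
  smulC_act : ∀ (c : ℂ) (a : A) (α : 𝔄), act (c • a) α = c • act a α
  norm_act : ∀ (a : A) (α : 𝔄), ‖act a α‖ ≤ ‖a‖ * ‖α‖
  mul_act : ∀ (a b : A) (α : 𝔄), act (a * b) α = a * act b α
  act_mul : ∀ (a : A) (α β : 𝔄), act a (α * β) = act (act a α) β
  star_compat : ∀ (a : A) (α β : 𝔄),
    act (star (act (star a) (star α))) β = star (act (star (act a β)) (star α))

variable {𝔄 A}

/-- The associated left action `α • a := (a* • α*)*`. -/
def CStarAction.lact (S : CStarAction 𝔄 A) (α : 𝔄) (a : A) : A :=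
  star (S.act (star a) (star α))

/-- The action is non degenerate if `a • α = 0` for all `a` forces `α = 0`. -/
def CStarAction.NonDegenerate (S : CStarAction 𝔄 A) : Prop :=
  ∀ α : 𝔄, (∀ a : A, S.act a α = 0) → α = 0

/-- The two-sided action is a biaction: `(a • α) b = a (α • b)`. -/
def CStarAction.Biaction (S : CStarAction 𝔄 A) : Prop :=
  ∀ (a : A) (α : 𝔄) (b : A), S.act a α * b = a * S.lact α b

/-- An `𝔄`-retraction: a positive right `𝔄`-module map `τ : A → 𝔄` with strictly dense
image such that `τ` sends some bounded approximate identity of `A` strictly to a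
projection `p` of `𝔄`.  (Nets are encoded by filters.) -/
structure IsRetraction (S : CStarAction 𝔄 A) (τ : A → 𝔄) : Prop where
  map_add : ∀ a b : A, τ (a + b) = τ a + τ b
  map_smulC : ∀ (c : ℂ) (a : A), τ (c • a) = c • τ a
  pos : ∀ a : A, IsPosElem (τ (star a * a))
  map_act : ∀ (a : A) (α : 𝔄), τ (S.act a α) = τ a * α
  strict_dense : ∀ (β : 𝔄) (ε : ℝ), 0 < ε → ∀ s : Finset 𝔄,
    ∃ a : A, ∀ α ∈ s, ‖τ (S.act a α) - β * α‖ < ε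
  bai : ∃ (l : Filter A) (p : 𝔄), l.NeBot ∧ (∃ C : ℝ, ∀ᶠ e in l, ‖e‖ ≤ C) ∧
    (∀ a : A, Tendsto (fun e => e * a) l (𝓝 a)) ∧
    (∀ a : A, Tendsto (fun e => a * e) l (𝓝 a)) ∧
    star p = p ∧ p * p = p ∧
    (∀ α : 𝔄, Tendsto (fun e => τ e * α) l (𝓝 (p * α))) ∧
    (∀ α : 𝔄, Tendsto (fun e => α * τ e) l (𝓝 (α * p)))

/-- An `𝔄`-trace: a tracial `𝔄`-retraction. -/
structure IsATrace (S : CStarAction 𝔄 A) (τ : A → 𝔄) extends IsRetraction S τ : Prop where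
  tracial : ∀ a b : A, τ (a * b) = τ (b * a)

/-! ### Hilbert C*-modules, adjointable operators, correspondences -/

variable (𝔄 : Type) [NonUnitalCStarAlgebra 𝔄]

/-- A (right) Hilbert `𝔄`-module structure on a complete normed space `X`. -/
structure HilbertModuleStr (X : Type) [NormedAddCommGroup X] [NormedSpace ℂ X]
    [CompleteSpace X] where
  smul : X → 𝔄 → X
  add_smul : ∀ (x y : X) (α : 𝔄), smul (x + y) α = smul x α + smul y α
  smul_add : ∀ (x : X) (α β : 𝔄), smul x (α + β) = smul x α + smul x β
  smulC_smul : ∀ (c : ℂ) (x : X) (α : 𝔄), smul (c • x) α = c • smul x α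
  smul_smulC : ∀ (c : ℂ) (x : X) (α : 𝔄), smul x (c • α) = c • smul x α
  smul_mul : ∀ (x : X) (α β : 𝔄), smul x (α * β) = smul (smul x α) β
  inner : X → X → 𝔄
  inner_add_left : ∀ x y z : X, inner (x + y) z = inner x z + inner y z
  inner_add_right : ∀ x y z : X, inner x (y + z) = inner x y + inner x z
  inner_smulC_right : ∀ (c : ℂ) (x y : X), inner x (c • y) = c • inner x y
  inner_smulC_left : ∀ (c : ℂ) (x y : X), inner (c • x) y = (starRingEnd ℂ c) • inner x y
  inner_smul_right : ∀ (x y : X) (α : 𝔄), inner x (smul y α) = inner x y * α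
  inner_star : ∀ x y : X, star (inner x y) = inner y x
  inner_pos : ∀ x : X, IsPosElem (inner x x)
  norm_inner : ∀ x : X, ‖x‖ ^ 2 = ‖inner x x‖

variable {𝔄}
variable {X : Type} [NormedAddCommGroup X] [NormedSpace ℂ X] [CompleteSpace X]

namespace HilbertModuleStr

variable (H : HilbertModuleStr 𝔄 X)

theorem inner_smul_left (x y : X) (α : 𝔄) :
    H.inner (H.smul x α) y = star α * H.inner x y := by
  rw [← H.inner_star, H.inner_smul_right, star_mul, H.inner_star]

theorem inner_zero_left (y : X) : H.inner 0 y = 0 := by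
  have h := H.inner_add_left 0 0 y
  rw [add_zero] at h
  exact left_eq_add.mp h

theorem inner_zero_right (x : X) : H.inner x 0 = 0 := by
  rw [← H.inner_star, H.inner_zero_left, star_zero]

theorem inner_neg_left (x y : X) : H.inner (-x) y = -H.inner x y := by
  have : (-x : X) = ((-1 : ℂ) • x) := by simp
  rw [this, H.inner_smulC_left]; simp

theorem inner_neg_right (x y : X) : H.inner x (-y) = -H.inner x y := by
  have : (-y : X) = ((-1 : ℂ) • y) := by simp
  rw [this, H.inner_smulC_right]; simp

theorem inner_sub_left (x y z : X) : H.inner (x - y) z = H.inner x z - H.inner y z := by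
  rw [sub_eq_add_neg, H.inner_add_left, H.inner_neg_left, sub_eq_add_neg]

theorem inner_sub_right (x y z : X) : H.inner x (y - z) = H.inner x y - H.inner x z := by
  rw [sub_eq_add_neg, H.inner_add_right, H.inner_neg_right, sub_eq_add_neg]

end HilbertModuleStr

/-- A bounded adjointable operator on a Hilbert `𝔄`-module. -/
structure Adj (H : HilbertModuleStr 𝔄 X) where
  toFun : X → X
  adjFun : X → X
  inner_adj : ∀ x y : X, H.inner (toFun x) y = H.inner x (adjFun y)

namespace Adj

variable {H : HilbertModuleStr 𝔄 X}

theorem ext' {S T : Adj H} (h1 : S.toFun = T.toFun) (h2 : S.adjFun = T.adjFun) : S = T := by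
  cases S; cases T; simp_all

instance : Add (Adj H) :=
  ⟨fun S T =>
    { toFun := fun x => S.toFun x + T.toFun x
      adjFun := fun x => S.adjFun x + T.adjFun x
      inner_adj := fun x y => by
        rw [H.inner_add_left, H.inner_add_right, S.inner_adj, T.inner_adj] }⟩

instance : Zero (Adj H) :=
  ⟨{ toFun := fun _ => 0
     adjFun := fun _ => 0
     inner_adj := fun x y => by rw [H.inner_zero_left, H.inner_zero_right] }⟩

instance : Neg (Adj H) :=
  ⟨fun S =>
    { toFun := fun x => -S.toFun x
      adjFun := fun x => -S.adjFun x
      inner_adj := fun x y => by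
        rw [H.inner_neg_left, H.inner_neg_right, S.inner_adj] }⟩

instance : Sub (Adj H) :=
  ⟨fun S T =>
    { toFun := fun x => S.toFun x - T.toFun x
      adjFun := fun x => S.adjFun x - T.adjFun x
      inner_adj := fun x y => by
        rw [H.inner_sub_left, H.inner_sub_right, S.inner_adj, T.inner_adj] }⟩

instance : SMul ℂ (Adj H) :=
  ⟨fun c S =>
    { toFun := fun x => c • S.toFun x
      adjFun := fun x => (starRingEnd ℂ c) • S.adjFun x
      inner_adj := fun x y => by
        rw [H.inner_smulC_left, H.inner_smulC_right, S.inner_adj] }⟩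

instance : Mul (Adj H) :=
  ⟨fun S T =>
    { toFun := fun x => S.toFun (T.toFun x)
      adjFun := fun x => T.adjFun (S.adjFun x)
      inner_adj := fun x y => by rw [S.inner_adj, T.inner_adj] }⟩

instance : One (Adj H) :=
  ⟨{ toFun := id
     adjFun := id
     inner_adj := fun _ _ => rfl }⟩

instance : Star (Adj H) :=
  ⟨fun S =>
    { toFun := S.adjFun
      adjFun := S.toFun
      inner_adj := fun x y =>
        calc H.inner (S.adjFun x) y = star (H.inner y (S.adjFun x)) := (H.inner_star _ _).symm
          _ = star (H.inner (S.toFun y) x) := by rw [S.inner_adj]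
          _ = H.inner x (S.toFun y) := H.inner_star _ _ }⟩

@[simp] theorem add_toFun (S T : Adj H) (x : X) : (S + T).toFun x = S.toFun x + T.toFun x := rfl
@[simp] theorem add_adjFun (S T : Adj H) (x : X) :
    (S + T).adjFun x = S.adjFun x + T.adjFun x := rfl
@[simp] theorem zero_toFun (x : X) : (0 : Adj H).toFun x = 0 := rfl
@[simp] theorem zero_adjFun (x : X) : (0 : Adj H).adjFun x = 0 := rfl

instance : AddCommMonoid (Adj H) where
  add_assoc S T U := ext' (funext fun x => add_assoc _ _ _) (funext fun x => add_assoc _ _ _)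
  zero_add S := ext' (funext fun x => zero_add _) (funext fun x => zero_add _)
  add_zero S := ext' (funext fun x => add_zero _) (funext fun x => add_zero _)
  add_comm S T := ext' (funext fun x => add_comm _ _) (funext fun x => add_comm _ _)
  nsmul := nsmulRec

/-- The operator norm of a (automatically bounded) adjointable operator. -/
noncomputable instance : Norm (Adj H) := ⟨fun T => ⨆ x : X, ‖T.toFun x‖ / ‖x‖⟩

end Adj

/-- The commutant of a set of adjointable operators. -/
def Commutant {H : HilbertModuleStr 𝔄 X} (Ω : Set (Adj H)) : Set (Adj H) :=
  {T | ∀ U ∈ Ω, T * U = U * T}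

/-! ### Correspondences, representations, c.c.p. module maps -/

variable (𝔄) in
/-- An `𝔄`-correspondence: a right Hilbert `𝔄`-module together with a left action of `𝔄`
by adjointable operators. -/
structure CorrStr (X : Type) [NormedAddCommGroup X] [NormedSpace ℂ X] [CompleteSpace X]
    extends HilbertModuleStr 𝔄 X where
  lsmul : 𝔄 → X → X
  lsmul_adj : ∀ (α : 𝔄) (x y : X),
    toHilbertModuleStr.inner (lsmul α x) y = toHilbertModuleStr.inner x (lsmul (star α) y)
  add_lsmul : ∀ (α β : 𝔄) (x : X), lsmul (α + β) x = lsmul α x + lsmul β x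
  smulC_lsmul : ∀ (c : ℂ) (α : 𝔄) (x : X), lsmul (c • α) x = c • lsmul α x
  mul_lsmul : ∀ (α β : 𝔄) (x : X), lsmul (α * β) x = lsmul α (lsmul β x)

namespace CorrStr

variable {X : Type} [NormedAddCommGroup X] [NormedSpace ℂ X] [CompleteSpace X]
variable (C : CorrStr 𝔄 X)

/-- The left action of `α ∈ 𝔄` as an adjointable operator. -/
def lactAdj (α : 𝔄) : Adj C.toHilbertModuleStr :=
  { toFun := C.lsmul α
    adjFun := C.lsmul (star α)
    inner_adj := fun x y => C.lsmul_adj α x y }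

/-- The canonical right `𝔄`-module structure on the adjointable operators of a
correspondence: `(T • α) x = T (α • x)`. -/
def ract (T : Adj C.toHilbertModuleStr) (α : 𝔄) : Adj C.toHilbertModuleStr :=
  T * C.lactAdj α

end CorrStr

variable (𝔄) in
/-- A representation of the `𝔄`-C*-module `A` in an `𝔄`-correspondence: a `*`-homomorphism
into the adjointable operators which is also a right `𝔄`-module map. -/
structure RepC {A : Type} [NonUnitalCStarAlgebra A] (S : CStarAction 𝔄 A)
    {X : Type} [NormedAddCommGroup X] [NormedSpace ℂ X] [CompleteSpace X]
    (C : CorrStr 𝔄 X) where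
  ρ : A → Adj C.toHilbertModuleStr
  map_add : ∀ a b : A, ρ (a + b) = ρ a + ρ b
  map_smulC : ∀ (c : ℂ) (a : A), ρ (c • a) = c • ρ a
  map_mul : ∀ a b : A, ρ (a * b) = ρ a * ρ b
  map_star : ∀ a : A, ρ (star a) = star (ρ a)
  map_act : ∀ (a : A) (α : 𝔄), ρ (S.act a α) = C.ract (ρ a) α

variable (𝔄) in
/-- A bundled `𝔄`-correspondence. -/
structure BCorr where
  X : Type
  [iN : NormedAddCommGroup X]
  [iS : NormedSpace ℂ X]
  [iC : CompleteSpace X]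
  corr : CorrStr 𝔄 X

attribute [instance] BCorr.iN BCorr.iS BCorr.iC

section CCP

variable {X : Type} [NormedAddCommGroup X] [NormedSpace ℂ X] [CompleteSpace X]

/-- A contractive completely positive right `𝔄`-module map from the adjointable operators
of an `𝔄`-correspondence into a normed `*`-object `Z` with a right `𝔄`-action. -/
structure IsCCPModMap (C : CorrStr 𝔄 X) {Z : Type} [AddCommMonoid Z] [Mul Z] [Star Z]
    [Norm Z] [SMul ℂ Z] (actZ : Z → 𝔄 → Z) (φ : Adj C.toHilbertModuleStr → Z) : Prop where
  map_add : ∀ S T, φ (S + T) = φ S + φ T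
  map_smulC : ∀ (c : ℂ) (T), φ (c • T) = c • φ T
  cp : IsCPMap φ
  contractive : ∀ T, ‖φ T‖ ≤ ‖T‖
  map_ract : ∀ (T) (α : 𝔄), φ (C.ract T α) = actZ (φ T) α

end CCP

/-- An amenable `𝔄`-trace: for every faithful representation of `A` in an
`𝔄`-correspondence `Y`, the trace `τ` extends to a c.c.p. right module map
`φ : B(Y) → 𝔄` which is invariant under conjugation by unitaries in `A + ℂ I`. -/
def IsAmenableTrace {A : Type} [NonUnitalCStarAlgebra A] (S : CStarAction 𝔄 A)
    (τ : A → 𝔄) : Prop :=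
  IsATrace S τ ∧
    ∀ (Y : BCorr 𝔄) (π : RepC 𝔄 S Y.corr), Function.Injective π.ρ →
      ∃ φ : Adj Y.corr.toHilbertModuleStr → 𝔄,
        IsCCPModMap Y.corr (fun z α => z * α) φ ∧
        (∀ a : A, φ (π.ρ a) = τ a) ∧
        (∀ (a : A) (c : ℂ),
          (star (π.ρ a + c • 1) * (π.ρ a + c • 1) = 1 ∧
            (π.ρ a + c • 1) * star (π.ρ a + c • 1) = 1) →
          ∀ T, φ ((π.ρ a + c • 1) * T * star (π.ρ a + c • 1)) = φ T)

/-! ### A model of the GNS construction `L²(A, τ)` for an `𝔄`-trace -/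

variable {A : Type} [NonUnitalCStarAlgebra A]
variable {X : Type} [NormedAddCommGroup X] [NormedSpace ℂ X] [CompleteSpace X]

variable (𝔄 X) in
/-- A realization of the Hilbert `𝔄`-module `L²(A, τ)` together with the canonical map
`a ↦ â`, the left/right regular representations and the left `𝔄`-action. -/
structure GNSModel (S : CStarAction 𝔄 A) (τ : A → 𝔄) where
  toH : HilbertModuleStr 𝔄 X
  hat : A → X
  hat_add : ∀ a b : A, hat (a + b) = hat a + hat b
  hat_smulC : ∀ (c : ℂ) (a : A), hat (c • a) = c • hat a
  hat_act : ∀ (a : A) (α : 𝔄), hat (S.act a α) = toH.smul (hat a) α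
  inner_hat : ∀ a b : A, toH.inner (hat a) (hat b) = τ (star a * b)
  dense_hat : DenseRange hat
  lreg : A → Adj toH
  lreg_spec : ∀ a b : A, (lreg a).toFun (hat b) = hat (a * b)
  rreg : A → Adj toH
  rreg_spec : ∀ a b : A, (rreg a).toFun (hat b) = hat (b * a)
  lact : 𝔄 → X → X
  lact_hat : ∀ (α : 𝔄) (a : A), lact α (hat a) = hat (S.lact α a)
  lact_adj : ∀ (α : 𝔄) (x y : X), toH.inner (lact α x) y = toH.inner x (lact (star α) y)

variable (𝔄 X) in
/-- A `GNSModel` together with the canonical cyclic vector `1̂ = lim êᵢ`. -/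
structure GNSModelOne (S : CStarAction 𝔄 A) (τ : A → 𝔄) extends GNSModel 𝔄 X S τ where
  one : X
  lreg_one : ∀ a : A, (lreg a).toFun one = hat a
  rreg_one : ∀ a : A, (rreg a).toFun one = hat a

namespace GNSModel

variable {S : CStarAction 𝔄 A} {τ : A → 𝔄}

/-- The left `𝔄`-action of a GNS model as an adjointable operator. -/
def lactAdj (M : GNSModel 𝔄 X S τ) (α : 𝔄) : Adj M.toH :=
  { toFun := M.lact α
    adjFun := M.lact (star α)
    inner_adj := fun x y => M.lact_adj α x y }

/-- The right `𝔄`-module structure on `B(L²(A,τ))`. -/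
def ract (M : GNSModel 𝔄 X S τ) (T : Adj M.toH) (α : 𝔄) : Adj M.toH :=
  T * M.lactAdj α

end GNSModel

/-! An operator `t` commuting with the left regular representation is determined by `ξ = t 1̂`,
since `t â = a ξ`, and the tracial identity `⟪â, J w⟫ = ⟪w, (a*)^⟫` turns this into `J ξ = t* 1̂`.
For `t ∈ π(A)'` and `s ∈ π^op(A)'`, writing `⟪b̂, t s â⟫` and `⟪b̂, s t â⟫` in terms of `ξ = t 1̂`
and `η = s 1̂` reduces `t s = s t` to the symmetry `⟪b (J ξ), η a⟫ = ⟪(J η) b, a ξ⟫`, which holds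
on `A × A` by traciality and extends by density. Since left and right multiplications commute,
both bicommutant identities follow. -/

namespace HilbertModuleStr

variable (H : HilbertModuleStr 𝔄 X)

theorem eq_zero_of_inner_self_eq_zero {x : X} (h : H.inner x x = 0) : x = 0 :=
  norm_eq_zero.mp <| (pow_eq_zero_iff two_ne_zero).mp <| by rw [H.norm_inner, h, norm_zero]

open MulOpposite in
/-- In Mathlib's convention `⟪x, a • y⟫ = a * ⟪x, y⟫`, `H` is a `CStarModule` over `𝔄ᵐᵒᵖ`, whose
Cauchy–Schwarz inequality gives continuity. -/
theorem continuous_inner : Continuous fun p : X × X => H.inner p.1 p.2 := by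
  let _ : PartialOrder 𝔄ᵐᵒᵖ := CStarAlgebra.spectralOrder _
  have _ : StarOrderedRing 𝔄ᵐᵒᵖ := CStarAlgebra.spectralOrderedRing _
  let _ : SMul 𝔄ᵐᵒᵖ X := ⟨fun α x => H.smul x α.unop⟩
  have norm_eq (x : X) : ‖x‖ = √‖H.inner x x‖ := by
    rw [← H.norm_inner, Real.sqrt_sq (norm_nonneg x)]
  let _ : CStarModule 𝔄ᵐᵒᵖ X :=
    { inner := fun x y => op (H.inner x y)
      inner_add_right := fun {x y z} => by rw [H.inner_add_right, op_add]
      inner_self_nonneg := fun {x} => by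
        obtain ⟨b, hb⟩ := H.inner_pos x
        rw [hb, op_mul, op_star]
        exact mul_star_self_nonneg (op b)
      inner_self := fun {x} => ⟨fun h => H.eq_zero_of_inner_self_eq_zero ((op_eq_zero_iff _).mp h),
        fun h => by rw [h, H.inner_zero_left, op_zero]⟩
      inner_op_smul_right := fun {a x y} => by
        change op (H.inner x (H.smul y a.unop)) = _
        rw [H.inner_smul_right, op_mul, op_unop]
      inner_smul_right_complex := fun {c x y} => by rw [H.inner_smulC_right, op_smul]
      star_inner := fun x y => by rw [← op_star, H.inner_star]
      norm_eq_sqrt_norm_inner_self := norm_eq }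
  exact continuous_unop.comp CStarModule.continuous_inner

theorem continuous_inner_left (y : X) : Continuous (H.inner · y) :=
  H.continuous_inner.comp (continuous_id.prodMk continuous_const)

theorem continuous_inner_right (x : X) : Continuous (H.inner x ·) :=
  H.continuous_inner.comp (continuous_const.prodMk continuous_id)

theorem ext_inner_left {x y : X} (h : ∀ z, H.inner z x = H.inner z y) : x = y := by
  refine sub_eq_zero.mp (H.eq_zero_of_inner_self_eq_zero ?_)
  rw [H.inner_sub_right, h, sub_self]

theorem ext_inner_left_of_denseRange {ι : Type*} {f : ι → X} (hf : DenseRange f) {x y : X}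
    (h : ∀ i, H.inner (f i) x = H.inner (f i) y) : x = y :=
  H.ext_inner_left fun z =>
    congrFun (hf.equalizer (H.continuous_inner_left x) (H.continuous_inner_left y) (funext h)) z

end HilbertModuleStr

theorem DenseRange.equalizer₂ {ι X Y : Type*} [TopologicalSpace X] [TopologicalSpace Y]
    [T2Space Y] {f : ι → X} (hf : DenseRange f) {F G : X → X → Y}
    (hF₁ : ∀ v, Continuous (F · v)) (hF₂ : ∀ u, Continuous (F u))
    (hG₁ : ∀ v, Continuous (G · v)) (hG₂ : ∀ u, Continuous (G u))
    (h : ∀ i j, F (f i) (f j) = G (f i) (f j)) (u v : X) : F u v = G u v := by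
  have h₂ (i : ι) : F (f i) = G (f i) := hf.equalizer (hF₂ _) (hG₂ _) (funext (h i))
  exact congrFun (hf.equalizer (hF₁ v) (hG₁ v) (funext fun i => congrFun (h₂ i) v)) u

theorem Set.centralizer_centralizer_eq_of_subset {M : Type*} [Mul M] {S T : Set M}
    (hTS : T ⊆ centralizer S) (hST : centralizer S ⊆ centralizer (centralizer T)) :
    centralizer (centralizer S) = centralizer T ∧ centralizer S = centralizer (centralizer T) :=
  ⟨(centralizer_subset hTS).antisymm
      (centralizer_centralizer_centralizer T ▸ centralizer_subset hST),
    hST.antisymm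
      (centralizer_subset (subset_centralizer_centralizer.trans (centralizer_subset hTS)))⟩

namespace Adj

variable {H : HilbertModuleStr 𝔄 X}

theorem star_mul (S T : Adj H) : star (S * T) = star T * star S := rfl

theorem star_star (T : Adj H) : star (star T) = T := rfl

theorem inner_adjFun (T : Adj H) (x y : X) : H.inner (T.adjFun x) y = H.inner x (T.toFun y) :=
  (star T).inner_adj x y

theorem continuous_inner_toFun_left (T : Adj H) (z : X) :
    Continuous fun x => H.inner (T.toFun x) z := by
  simpa only [T.inner_adj] using H.continuous_inner_left (T.adjFun z)

theorem continuous_inner_toFun_right (T : Adj H) (z : X) :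
    Continuous fun x => H.inner z (T.toFun x) := by
  simpa only [← T.inner_adjFun] using H.continuous_inner_right (T.adjFun z)

theorem ext_of_denseRange {ι : Type*} {f : ι → X} (hf : DenseRange f) {S T : Adj H}
    (h : ∀ i, S.toFun (f i) = T.toFun (f i)) : S = T := by
  have hto : S.toFun = T.toFun := funext fun x => H.ext_inner_left fun z =>
    congrFun (hf.equalizer (S.continuous_inner_toFun_right z) (T.continuous_inner_toFun_right z)
      (funext fun i => by simp only [Function.comp_apply, h])) x
  refine ext' hto (funext fun y => H.ext_inner_left fun x => ?_)
  rw [← S.inner_adj, ← T.inner_adj, hto]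

theorem star_mem_centralizer {Ω : Set (Adj H)} (hΩ : ∀ U ∈ Ω, star U ∈ Ω) {T : Adj H}
    (hT : T ∈ Set.centralizer Ω) : star T ∈ Set.centralizer Ω := fun U hU => by
  have h := congrArg star (hT _ (hΩ U hU))
  rwa [star_mul, star_mul, star_star, eq_comm] at h

end Adj

theorem commutant_eq_centralizer {H : HilbertModuleStr 𝔄 X} (Ω : Set (Adj H)) :
    Commutant Ω = Set.centralizer Ω := by
  ext T
  exact forall₂_congr fun _ _ => eq_comm

namespace GNSModel

variable {S : CStarAction 𝔄 A} {τ : A → 𝔄} (M : GNSModel 𝔄 X S τ)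

theorem ext_inner_hat {x y : X} (h : ∀ a, M.toH.inner (M.hat a) x = M.toH.inner (M.hat a) y) :
    x = y :=
  M.toH.ext_inner_left_of_denseRange M.dense_hat h

theorem ext_adj {T U : Adj M.toH} (h : ∀ a, T.toFun (M.hat a) = U.toFun (M.hat a)) : T = U :=
  Adj.ext_of_denseRange M.dense_hat h

theorem star_lreg (a : A) : star (M.lreg a) = M.lreg (star a) :=
  M.ext_adj fun b => M.ext_inner_hat fun c => by
    change M.toH.inner _ ((M.lreg a).adjFun _) = _
    rw [← Adj.inner_adj, M.lreg_spec, M.lreg_spec, M.inner_hat, M.inner_hat, star_mul, mul_assoc]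

theorem star_rreg (hτ : ∀ a b : A, τ (a * b) = τ (b * a)) (a : A) :
    star (M.rreg a) = M.rreg (star a) :=
  M.ext_adj fun b => M.ext_inner_hat fun c => by
    change M.toH.inner _ ((M.rreg a).adjFun _) = _
    rw [← Adj.inner_adj, M.rreg_spec, M.rreg_spec, M.inner_hat, M.inner_hat, star_mul, mul_assoc,
      hτ (star a), mul_assoc]

theorem commute_lreg_rreg (a b : A) : Commute (M.lreg a) (M.rreg b) :=
  M.ext_adj fun c => by
    change (M.lreg a).toFun ((M.rreg b).toFun _) = (M.rreg b).toFun ((M.lreg a).toFun _)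
    rw [M.rreg_spec, M.lreg_spec, M.lreg_spec, M.rreg_spec, mul_assoc]

theorem inner_hat_conj (hτ : ∀ a b : A, τ (a * b) = τ (b * a)) {J : X → X} (hJc : Continuous J)
    (hJhat : ∀ a, J (M.hat a) = M.hat (star a)) (a : A) (w : X) :
    M.toH.inner (M.hat a) (J w) = M.toH.inner w (M.hat (star a)) := by
  refine congrFun (M.dense_hat.equalizer ((M.toH.continuous_inner_right _).comp hJc)
    (M.toH.continuous_inner_left _) (funext fun c => ?_)) w
  simp only [Function.comp_apply, hJhat, M.inner_hat]
  exact hτ _ _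

theorem inner_lreg_conj_rreg (hτ : ∀ a b : A, τ (a * b) = τ (b * a)) {J : X → X}
    (hJc : Continuous J) (hJhat : ∀ a, J (M.hat a) = M.hat (star a)) (a b : A) (u v : X) :
    M.toH.inner ((M.lreg b).toFun (J u)) ((M.rreg a).toFun v) =
      M.toH.inner ((M.rreg b).toFun (J v)) ((M.lreg a).toFun u) := by
  refine M.dense_hat.equalizer₂
    (F := fun u v => M.toH.inner ((M.lreg b).toFun (J u)) ((M.rreg a).toFun v))
    (G := fun u v => M.toH.inner ((M.rreg b).toFun (J v)) ((M.lreg a).toFun u))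
    (fun _ => ((M.lreg b).continuous_inner_toFun_left _).comp hJc)
    (fun _ => (M.rreg a).continuous_inner_toFun_right _)
    (fun _ => (M.lreg a).continuous_inner_toFun_right _)
    (fun _ => ((M.rreg b).continuous_inner_toFun_left _).comp hJc) (fun c d => ?_) u v
  simp only [hJhat, M.lreg_spec, M.rreg_spec, M.inner_hat, star_mul, star_star, mul_assoc]
  rw [hτ c]
  simp only [mul_assoc]

end GNSModel

namespace GNSModelOne

variable {S : CStarAction 𝔄 A} {τ : A → 𝔄} (M : GNSModelOne 𝔄 X S τ) {ρ : A → Adj M.toH}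

theorem apply_hat_of_mem_centralizer (hρ_one : ∀ a, (ρ a).toFun M.one = M.hat a) {T : Adj M.toH}
    (hT : T ∈ Set.centralizer (Set.range ρ)) (a : A) :
    T.toFun (M.hat a) = (ρ a).toFun (T.toFun M.one) := by
  rw [← hρ_one]
  exact congrArg (Adj.toFun · M.one) (hT _ ⟨a, rfl⟩).symm

theorem conj_apply_one (hτ : ∀ a b : A, τ (a * b) = τ (b * a)) {J : X → X} (hJc : Continuous J)
    (hJhat : ∀ a, J (M.hat a) = M.hat (star a)) (hρ_one : ∀ a, (ρ a).toFun M.one = M.hat a)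
    (hρ_star : ∀ a, star (ρ a) = ρ (star a)) {T : Adj M.toH}
    (hT : T ∈ Set.centralizer (Set.range ρ)) :
    J (T.toFun M.one) = T.adjFun M.one :=
  M.ext_inner_hat fun a => calc
    M.toH.inner (M.hat a) (J (T.toFun M.one))
      = M.toH.inner (T.toFun M.one) ((star (ρ a)).toFun M.one) := by
        rw [M.inner_hat_conj hτ hJc hJhat, hρ_star, hρ_one]
    _ = M.toH.inner (M.hat a) (T.adjFun M.one) := by
        rw [← T.inner_adj, M.apply_hat_of_mem_centralizer hρ_one hT, (ρ a).inner_adj]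
        rfl

theorem adjFun_hat_of_mem_centralizer (hτ : ∀ a b : A, τ (a * b) = τ (b * a)) {J : X → X}
    (hJc : Continuous J) (hJhat : ∀ a, J (M.hat a) = M.hat (star a))
    (hρ_one : ∀ a, (ρ a).toFun M.one = M.hat a) (hρ_star : ∀ a, star (ρ a) = ρ (star a))
    {T : Adj M.toH} (hT : T ∈ Set.centralizer (Set.range ρ)) (b : A) :
    T.adjFun (M.hat b) = (ρ b).toFun (J (T.toFun M.one)) := by
  have hT_star : star T ∈ Set.centralizer (Set.range ρ) :=
    Adj.star_mem_centralizer (by rintro _ ⟨a, rfl⟩; exact ⟨star a, (hρ_star a).symm⟩) hT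
  rw [M.conj_apply_one hτ hJc hJhat hρ_one hρ_star hT]
  exact M.apply_hat_of_mem_centralizer hρ_one hT_star b

theorem commute_of_mem_centralizer_lreg_rreg (hτ : ∀ a b : A, τ (a * b) = τ (b * a)) {J : X → X}
    (hJc : Continuous J) (hJhat : ∀ a, J (M.hat a) = M.hat (star a)) {T U : Adj M.toH}
    (hT : T ∈ Set.centralizer (Set.range M.lreg)) (hU : U ∈ Set.centralizer (Set.range M.rreg)) :
    Commute U T :=
  M.ext_adj fun a => M.ext_inner_hat fun b => calc
    M.toH.inner (M.hat b) (U.toFun (T.toFun (M.hat a)))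
      = M.toH.inner ((M.rreg b).toFun (J (U.toFun M.one))) ((M.lreg a).toFun (T.toFun M.one)) := by
        rw [← U.inner_adjFun, M.adjFun_hat_of_mem_centralizer hτ hJc hJhat M.rreg_one
          (M.star_rreg hτ) hU, M.apply_hat_of_mem_centralizer M.lreg_one hT]
    _ = M.toH.inner ((M.lreg b).toFun (J (T.toFun M.one))) ((M.rreg a).toFun (U.toFun M.one)) :=
        (M.inner_lreg_conj_rreg hτ hJc hJhat a b _ _).symm
    _ = M.toH.inner (M.hat b) (T.toFun (U.toFun (M.hat a))) := by
        rw [← T.inner_adjFun, M.adjFun_hat_of_mem_centralizer hτ hJc hJhat M.lreg_one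
          M.star_lreg hT, M.apply_hat_of_mem_centralizer M.rreg_one hU]

end GNSModelOne

/-- Let `τ : A → 𝔄` be an `𝔄`-trace with `𝔄` unital, and let `J` be the
canonical conjugation on `L²(A,τ)` (the continuous extension of `â ↦ (a*)^`).  Then
(iii) `J t 1̂ = t* 1̂` for every `t ∈ π_τ(A)'`, and (iv) `π_τ(A)'' = π_τ^op(A^op)'` and
`π_τ(A)' = π_τ^op(A^op)''` in `B(L²(A,τ))`. -/
theorem trace_conjugation_commutant_unital
    {𝔄 A : Type} [CStarAlgebra 𝔄] [NonUnitalCStarAlgebra A]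
    {X : Type} [NormedAddCommGroup X] [NormedSpace ℂ X] [CompleteSpace X]
    (S : CStarAction 𝔄 A) (τ : A → 𝔄) (hτ : IsATrace S τ)
    (M : GNSModelOne 𝔄 X S τ)
    (J : X → X) (hJc : Continuous J)
    (hJhat : ∀ a : A, J (M.hat a) = M.hat (star a)) :
    (∀ t : Adj M.toH, t ∈ Commutant (Set.range M.lreg) →
      J (t.toFun M.one) = (star t).toFun M.one) ∧
    Commutant (Commutant (Set.range M.lreg)) = Commutant (Set.range M.rreg) ∧
    Commutant (Set.range M.lreg) = Commutant (Commutant (Set.range M.rreg)) := by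
  simp only [commutant_eq_centralizer]
  refine ⟨fun t ht => M.conj_apply_one hτ.tracial hJc hJhat M.lreg_one M.star_lreg ht,
    Set.centralizer_centralizer_eq_of_subset ?_ ?_⟩
  · rintro _ ⟨b, rfl⟩ _ ⟨a, rfl⟩
    exact M.commute_lreg_rreg a b
  · exact fun T hT U hU => M.commute_of_mem_centralizer_lreg_rreg hτ.tracial hJc hJhat hT hU
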